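/- Let p be a prime and λ a p-restricted partition. Then j(λ) equals the first part of the Mullineux conjugate M(λ). -/

import Mathlib

namespace Mullineux

/-- The rim of a partition (given as its list of parts, top row first; nodes `(i,j)` with
row index `i` starting at `0` and column index `j` starting at `1`), listed in the order
obtained by reading along the rim from left to right (i.e. from the bottom-left node
to the top-right node). -/
def rimList (l : List ℕ) : List (ℕ × ℕ) :=
  ((List.range l.length).reverse).flatMap (fun i =>
    (List.range' (max (l.getD (i+1) 0) 1) (l.getD i 0 + 1 - max (l.getD (i+1) 0) 1)).map
      (fun j => (i, j)))

/-- Auxiliary function computing the list of `p`-segments of a list of rim nodes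
(read from left to right): take `p` nodes, then continue from the column strictly to
the right of the rightmost node taken so far. -/
def segsAux (p : ℕ) : ℕ → List (ℕ × ℕ) → List (List (ℕ × ℕ))
  | 0, _ => []
  | _ + 1, [] => []
  | fuel + 1, L =>
      let s := L.take p
      let c := ((s.getLast?).map Prod.snd).getD 0
      s :: segsAux p fuel ((L.drop p).filter (fun q => c < q.2))

/-- The `p`-segments of the rim of the partition `l`. -/
def segs (p : ℕ) (l : List ℕ) : List (List (ℕ × ℕ)) :=
  segsAux p (rimList l).length (rimList l)

/-- The `p`-rim of the partition `l`: the union of the `p`-segments of its rim. -/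
def pRim (p : ℕ) (l : List ℕ) : List (ℕ × ℕ) := (segs p l).flatten

/-- `a(λ)`: the number of nodes in the `p`-rim of `λ`. -/
def aNum (p : ℕ) (l : List ℕ) : ℕ := (pRim p l).length

/-- The final (i.e. `p`-th) nodes of the `p`-segments having exactly `p` nodes. -/
def segEnds (p : ℕ) (l : List ℕ) : List (ℕ × ℕ) :=
  (segs p l).filterMap (fun s => if s.length = p then s.getLast? else none)

/-- `J(λ)`: delete from `λ` every node of the `p`-rim which is the rightmost node of its
row but is not the `p`-th node of a `p`-segment. -/
def Jmap (p : ℕ) (l : List ℕ) : List ℕ :=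
  (List.range l.length).map (fun i =>
    let li := l.getD i 0
    if (i, li) ∈ pRim p l ∧ (i, li) ∉ segEnds p l then li - 1 else li)

/-- `j(λ) = |λ| - |J(λ)|`. -/
def jNum (p : ℕ) (l : List ℕ) : ℕ := l.sum - (Jmap p l).sum

/-- A partition, encoded as a weakly decreasing list of natural numbers
(trailing zeros allowed). -/
def IsPartition (l : List ℕ) : Prop := l.Pairwise (· ≥ ·)

/-- A `p`-restricted partition: `λ_i - λ_{i+1} < p` for all `i`. -/
def IsRestricted (p : ℕ) (l : List ℕ) : Prop :=
  IsPartition l ∧ ∀ i, l.getD i 0 < l.getD (i+1) 0 + p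

/-- Removing the whole `p`-rim of `λ` (used in forming the Mullineux symbol). -/
def rimRemove (p : ℕ) (l : List ℕ) : List ℕ :=
  (List.range l.length).map (fun i =>
    l.getD i 0 - ((pRim p l).filter (fun q => q.1 = i)).length)

/-- The `i`-th part (with `i` starting from `0`) of the Mullineux conjugate of `λ`,
as computed by Xu's algorithm: `j(J^i(λ))`. -/
def xuPart (p : ℕ) (l : List ℕ) (i : ℕ) : ℕ := jNum p ((Jmap p)^[i] l)

/-- The Mullineux conjugate of `λ`, as computed by Xu's algorithm (padded with
trailing zeros to length `|λ|`). -/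
def xuM (p : ℕ) (l : List ℕ) : List ℕ := (List.range l.sum).map (xuPart p l)

/-- `μ` has the Mullineux symbol prescribed by `λ`: for every `i ≥ 0`, writing
`λ⁽ⁱ⁾` (resp. `μ⁽ⁱ⁾`) for the result of removing the `p`-rim `i` times, the numbers of
`p`-rim nodes agree, `a_i := a(λ⁽ⁱ⁾) = a(μ⁽ⁱ⁾)`, and the first row of `μ⁽ⁱ⁾` is
`s_i = a_i - r_i` if `p ∣ a_i` and `a_i + 1 - r_i` otherwise, where `r_i` is the first
row of `λ⁽ⁱ⁾`. -/
def IsMullineuxConjugate (p : ℕ) (l mu : List ℕ) : Prop :=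
  ∀ i : ℕ,
    aNum p ((rimRemove p)^[i] l) = aNum p ((rimRemove p)^[i] mu) ∧
    (((rimRemove p)^[i] mu).getD 0 0 : ℤ) =
      (if (p : ℤ) ∣ (aNum p ((rimRemove p)^[i] l) : ℤ)
       then (aNum p ((rimRemove p)^[i] l) : ℤ) - (((rimRemove p)^[i] l).getD 0 0 : ℤ)
       else (aNum p ((rimRemove p)^[i] l) : ℤ) + 1 - (((rimRemove p)^[i] l).getD 0 0 : ℤ))

/-- The sequence `x_m, x_{m-1}, …, x_1` (as a list `[x_1,…,x_m]`) defined recursively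
downwards by `x_i = 0` if `p ∣ λ_i + x_{i+1} + ⋯ + x_m` and `x_i = 1` otherwise. -/
def xSeq (p : ℕ) : List ℕ → List ℕ
  | [] => []
  | a :: rest =>
      let xs := xSeq p rest
      (if p ∣ (a + xs.sum) then 0 else 1) :: xs

end Mullineux

/-!
The Mullineux symbol prescribes the first part `a(λ) + [p ∤ a(λ)] - λ₁` of `M(λ)`, so it suffices
to show that `J` removes that many nodes (Xu's formula). Read from left to right, the rim is a
lattice path from column `1` to column `λ₁` which moves one column to the right after each node that
is not rightmost in its row and stays in its column otherwise. Hence within a `p`-segment the column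
grows by the number of such nodes before its last one, and each segment starts one column to the
right of the `p`-th node of the previous segment. The `p`-rim nodes that are not rightmost in their
row or are the `p`-th node of a segment therefore number `λ₁ - 1`, one per step to the right, plus
one if the last segment (the only one that can be short) is full, i.e. `λ₁ - [p ∤ a(λ)]`; `J`
removes the other `a(λ) - λ₁ + [p ∤ a(λ)]` nodes.
-/

namespace Mullineux

open List

lemma getLast?_eq_of_isSuffix {α : Type*} {l₁ l₂ : List α} (h : l₁ <:+ l₂) (hne : l₁ ≠ []) :
    l₁.getLast? = l₂.getLast? := by
  obtain ⟨pre, rfl⟩ := h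
  exact (getLast?_append_of_ne_nil _ hne).symm

lemma filter_suffix_of_pairwise {α : Type*} {R : α → α → Prop} {P : α → Prop} [DecidablePred P]
    (hP : ∀ a b, R a b → P a → P b) : ∀ {L : List α}, L.Pairwise R → L.filter P <:+ L
  | [], _ => suffix_refl []
  | a :: L, h => by
    rw [pairwise_cons] at h
    by_cases ha : P a
    · rw [filter_eq_self.mpr]
      intro b hb
      rcases mem_cons.mp hb with rfl | hb
      · simpa using ha
      · simpa using hP a b (h.1 b hb) ha
    · rw [filter_cons_of_neg (by simpa using ha)]
      exact (filter_suffix_of_pairwise hP h.2).trans (suffix_cons a L)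

lemma head?_filter_lt {α : Type*} (f : α → ℕ) (c : ℕ) :
    ∀ {L : List α}, IsChain (fun a b => f b ≤ f a + 1) L → (∀ q ∈ L.head?, f q ≤ c + 1) →
      ∀ q ∈ (L.filter (fun q => c < f q)).head?, f q = c + 1
  | [], _, _ => by simp
  | a :: L, h, ha => by
    by_cases hca : c < f a
    · rw [filter_cons_of_pos (by simpa using hca)]
      have := ha a rfl
      simp only [head?_cons, Option.mem_def, Option.some_inj, forall_eq']
      omega
    · rw [filter_cons_of_neg (by simpa using hca)]
      refine head?_filter_lt f c h.tail fun b hb => ?_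
      have := (isChain_cons.mp h).1 b hb
      omega

lemma countP_append_singleton_not_or_mem_cons {α : Type*} [BEq α] [LawfulBEq α] {r : α → Prop}
    [DecidablePred r] {d E : List α} {x : α} (hx : x ∉ d) (hE : ∀ q ∈ d, q ∉ E) :
    (d ++ [x]).countP (fun q => ¬ r q ∨ q ∈ x :: E) = d.countP (fun q => ¬ r q) + 1 := by
  rw [countP_append, countP_singleton, if_pos (by simp)]
  congr 1
  refine countP_congr fun q hq => ?_
  simp [show q ≠ x by rintro rfl; exact hx hq, hE q hq]

lemma countP_append_not_or_mem_cons {α : Type*} [BEq α] [LawfulBEq α] {r : α → Prop}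
    [DecidablePred r] {s F E : List α} (hs : s ≠ []) (hnd : (s ++ F).Nodup)
    (hE : ∀ q ∈ E, q ∈ F) :
    (s ++ F).countP (fun q => ¬ r q ∨ q ∈ s.getLast hs :: E)
      = s.dropLast.countP (fun q => ¬ r q) + 1 + F.countP (fun q => ¬ r q ∨ q ∈ E) := by
  have hdisj : s.Disjoint F := (nodup_append'.mp hnd).2.2
  have hx : s.getLast hs ∉ s.dropLast := by
    have := hnd.sublist (sublist_append_left s F)
    rw [← dropLast_append_getLast hs] at this
    exact fun h => (nodup_append'.mp this).2.2 h (mem_singleton_self _)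
  have hs' := countP_append_singleton_not_or_mem_cons (r := r) hx
    fun q hq hqE => hdisj (dropLast_subset s hq) (hE q hqE)
  rw [dropLast_append_getLast hs] at hs'
  rw [countP_append, hs']
  congr 1
  refine countP_congr fun q hq => ?_
  have : q ≠ s.getLast hs := by rintro rfl; exact hdisj (getLast_mem hs) hq
  simp [this]

lemma countP_mem_and_comm {α : Type*} [BEq α] [LawfulBEq α] (P : α → Prop) [DecidablePred P]
    {A B : List α} (hA : A.Nodup) (hB : B.Nodup) :
    A.countP (fun q => q ∈ B ∧ P q) = B.countP (fun q => q ∈ A ∧ P q) := by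
  rw [countP_eq_length_filter, countP_eq_length_filter]
  refine Perm.length_eq ((perm_ext_iff_of_nodup (hA.filter _) (hB.filter _)).mpr fun q => ?_)
  simp only [mem_filter, decide_eq_true_eq]
  tauto

lemma sum_map_ite_sub_one_add_countP {α : Type*} (P : α → Prop) [DecidablePred P] (f : α → ℕ) :
    ∀ {L : List α}, (∀ a ∈ L, P a → 0 < f a) →
      (L.map fun a => if P a then f a - 1 else f a).sum + L.countP (fun a => P a) = (L.map f).sum
  | [], _ => rfl
  | a :: L, h => by
    have ih := sum_map_ite_sub_one_add_countP P f fun b hb => h b (mem_cons_of_mem a hb)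
    have ha := h a mem_cons_self
    simp only [map_cons, sum_cons, countP_cons]
    by_cases hPa : P a
    · have := ha hPa
      simp only [hPa, if_true, decide_true]
      omega
    · simp only [hPa, if_false, decide_false, Bool.false_eq_true]
      omega

lemma map_getD_range (l : List ℕ) : (range l.length).map (l.getD · 0) = l :=
  ext_getElem (by simp) fun i _ h => by simp [getElem?_eq_getElem h]

section ColumnWalk

variable (r : ℕ × ℕ → Prop)

/-- A walk along a rim, read from left to right, goes up after a node marked by `r` (the rightmost
node of its row) and to the right otherwise. -/
def ColStep (q q' : ℕ × ℕ) : Prop := (r q ∧ q'.2 = q.2) ∨ (¬ r q ∧ q'.2 = q.2 + 1)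

variable {r}

lemma ColStep.col_le {q q' : ℕ × ℕ} (h : ColStep r q q') : q.2 ≤ q'.2 := by
  rcases h with ⟨-, h⟩ | ⟨-, h⟩ <;> omega

lemma ColStep.col_le_succ {q q' : ℕ × ℕ} (h : ColStep r q q') : q'.2 ≤ q.2 + 1 := by
  rcases h with ⟨-, h⟩ | ⟨-, h⟩ <;> omega

lemma pairwise_col_le_of_isChain {L : List (ℕ × ℕ)} (h : IsChain (ColStep r) L) :
    L.Pairwise (fun a b => a.2 ≤ b.2) :=
  pairwise_map.mp ((isChain_map Prod.snd).mpr (h.imp fun _ _ => ColStep.col_le)).pairwise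

lemma col_getLast_eq [DecidablePred r] :
    ∀ {L : List (ℕ × ℕ)} (hL : L ≠ []), IsChain (ColStep r) L →
      (L.getLast hL).2 = (L.head hL).2 + L.dropLast.countP (fun q => ¬ r q)
  | [_], _, _ => by simp
  | a :: b :: L, _, h => by
    rw [isChain_cons_cons] at h
    rw [getLast_cons_cons, dropLast_cons_cons, countP_cons, col_getLast_eq (cons_ne_nil b L) h.2]
    rcases h.1 with ⟨hr, hb⟩ | ⟨hr, hb⟩
    · simp [hr, hb]
    · simp [hr, hb]
      omega

lemma col_getLast_eq_of_getLast [DecidablePred r] {L : List (ℕ × ℕ)} (hL : L ≠ [])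
    (hchain : IsChain (ColStep r) L) (hlast : r (L.getLast hL)) :
    (L.getLast hL).2 = (L.head hL).2 + L.countP (fun q => ¬ r q) := by
  have hsplit := countP_append (l₁ := L.dropLast) (l₂ := [L.getLast hL]) (p := fun q => ¬ r q)
  rw [dropLast_append_getLast hL] at hsplit
  simp only [countP_singleton, hlast, not_true_eq_false, decide_false, Bool.false_eq_true,
    if_false, add_zero] at hsplit
  rw [hsplit, col_getLast_eq hL hchain]

lemma head?_filter_drop_col [DecidablePred r] {p : ℕ} {L : List (ℕ × ℕ)}
    (hchain : IsChain (ColStep r) L) (hs : L.take p ≠ []) :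
    ∀ q ∈ ((L.drop p).filter (fun q => ((L.take p).getLast hs).2 < q.2)).head?,
      q.2 = ((L.take p).getLast hs).2 + 1 := by
  have hjunction : ∀ y ∈ (L.drop p).head?, ColStep r ((L.take p).getLast hs) y :=
    (isChain_append.mp ((take_append_drop p L).symm ▸ hchain)).2.2 _
      (getLast?_eq_some_getLast hs)
  exact head?_filter_lt Prod.snd _ ((hchain.drop p).imp fun _ _ => ColStep.col_le_succ)
    fun y hy => (hjunction y hy).col_le_succ

lemma getLast?_col_filter_lt {s t : List (ℕ × ℕ)} (hs : s ≠ [])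
    (hmono : (s ++ t).Pairwise (fun a b => a.2 ≤ b.2)) (c : ℕ) :
    ((t.filter fun q => (s.getLast hs).2 < q.2).getLast?.map Prod.snd).getD (s.getLast hs).2
      = ((s ++ t).getLast?.map Prod.snd).getD c := by
  rcases eq_or_ne t [] with rfl | htne
  · simp [getLast?_eq_some_getLast hs]
  rw [getLast?_append_of_ne_nil _ htne, getLast?_eq_some_getLast htne]
  by_cases ht' : t.filter (fun q => (s.getLast hs).2 < q.2) = []
  · have hle := (pairwise_append.mp hmono).2.2 _ (getLast_mem hs) _ (getLast_mem htne)
    have hge := filter_eq_nil_iff.mp ht' _ (getLast_mem htne)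
    simp only [decide_eq_true_eq, not_lt] at hge
    simp only [ht', getLast?_nil, Option.map_none, Option.getD_none, Option.map_some,
      Option.getD_some]
    omega
  · have hsuf := filter_suffix_of_pairwise (P := fun q : ℕ × ℕ => (s.getLast hs).2 < q.2)
      (fun _ _ hab ha => lt_of_lt_of_le ha hab) (pairwise_append.mp hmono).2.1
    rw [getLast?_eq_of_isSuffix hsuf ht', getLast?_eq_some_getLast htne]
    rfl

end ColumnWalk

section Segments

def fullSegEnds (p : ℕ) (S : List (List (ℕ × ℕ))) : List (ℕ × ℕ) :=
  S.filterMap (fun s => if s.length = p then s.getLast? else none)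

variable {p : ℕ}

lemma mem_flatten_of_mem_fullSegEnds {S : List (List (ℕ × ℕ))} {q : ℕ × ℕ}
    (h : q ∈ fullSegEnds p S) : q ∈ S.flatten := by
  obtain ⟨s, hs, hq⟩ := mem_filterMap.mp h
  split_ifs at hq
  exact mem_flatten.mpr ⟨s, hs, mem_of_mem_getLast? hq⟩

lemma segsAux_nil (fuel : ℕ) : segsAux p fuel [] = [] := by
  cases fuel <;> rfl

lemma segsAux_succ {fuel : ℕ} {L : List (ℕ × ℕ)} (hs : L.take p ≠ []) :
    segsAux p (fuel + 1) L = L.take p ::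
      segsAux p fuel ((L.drop p).filter (fun q => ((L.take p).getLast hs).2 < q.2)) := by
  obtain ⟨a, t, rfl⟩ := exists_cons_of_ne_nil (ne_nil_of_take_ne_nil hs)
  simp [segsAux, getLast?_eq_some_getLast hs]

lemma segsAux_succ_of_length_lt {fuel : ℕ} {L : List (ℕ × ℕ)} (hL : L ≠ [])
    (h : L.length < p) : segsAux p (fuel + 1) L = [L] := by
  obtain ⟨a, t, rfl⟩ := exists_cons_of_ne_nil hL
  simp [segsAux, take_of_length_le h.le, drop_eq_nil_of_le h.le, segsAux_nil]

variable {r : ℕ × ℕ → Prop} [DecidablePred r]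

lemma countP_flatten_cons_of_length_eq {s : List (ℕ × ℕ)} {S : List (List (ℕ × ℕ))}
    (hs : s ≠ []) (hfull : s.length = p) (hnd : (s :: S).flatten.Nodup) :
    (s :: S).flatten.countP (fun q => ¬ r q ∨ q ∈ fullSegEnds p (s :: S))
      = s.dropLast.countP (fun q => ¬ r q) + 1
        + S.flatten.countP (fun q => ¬ r q ∨ q ∈ fullSegEnds p S) := by
  have hends : fullSegEnds p (s :: S) = s.getLast hs :: fullSegEnds p S := by
    simp [fullSegEnds, hfull, getLast?_eq_some_getLast hs]
  rw [hends, flatten_cons]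
  exact countP_append_not_or_mem_cons hs hnd fun _ hq => mem_flatten_of_mem_fullSegEnds hq

theorem segsAux_countP (hp : 0 < p) :
    ∀ (fuel : ℕ) {L : List (ℕ × ℕ)} (c : ℕ), L.length ≤ fuel →
      IsChain (ColStep r) L → L.Nodup → (∀ q ∈ L.head?, q.2 = c + 1) → (∀ q ∈ L.getLast?, r q) →
      (segsAux p fuel L).flatten <+ L ∧
      (segsAux p fuel L).flatten.countP (fun q => ¬ r q ∨ q ∈ fullSegEnds p (segsAux p fuel L))
        + c + (if p ∣ (segsAux p fuel L).flatten.length then 0 else 1)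
        = (L.getLast?.map Prod.snd).getD c
  | 0, L, c, hfuel, _, _, _, _ => by
    obtain rfl := length_eq_zero_iff.mp (Nat.le_zero.mp hfuel)
    simp [segsAux]
  | fuel + 1, L, c, hfuel, hchain, hnd, hhead, hlast => by
    rcases eq_or_ne L [] with rfl | hL
    · simp [segsAux_nil]
    have hhead' := hhead _ (head?_eq_some_head hL)
    rw [getLast?_eq_some_getLast hL, Option.map_some, Option.getD_some]
    rcases lt_or_ge L.length p with hlt | hge
    · rw [segsAux_succ_of_length_lt hL hlt, flatten_singleton,
        if_neg (Nat.not_dvd_of_pos_of_lt (length_pos_iff.mpr hL) hlt),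
        col_getLast_eq_of_getLast hL hchain (hlast _ (getLast?_eq_some_getLast hL)), hhead']
      simp only [fullSegEnds, filterMap_cons, hlt.ne, if_false, filterMap_nil, mem_nil_iff,
        or_false]
      exact ⟨Sublist.refl L, by omega⟩
    have hs : L.take p ≠ [] := by simp [take_eq_nil_iff, hp.ne', hL]
    have hsplit : L.take p ++ L.drop p = L := take_append_drop p L
    have hcol := col_getLast_eq hs (hchain.take p)
    rw [head_take, hhead'] at hcol
    have hfinal := getLast?_col_filter_lt hs (hsplit ▸ pairwise_col_le_of_isChain hchain) c
    rw [hsplit, getLast?_eq_some_getLast hL, Option.map_some, Option.getD_some] at hfinal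
    have hhead₂ := head?_filter_drop_col hchain hs
    have hfull : (L.take p).length = p := by rw [length_take]; omega
    rw [segsAux_succ hs]
    generalize L.take p = s at *
    have hsuf : (L.drop p).filter (fun q => (s.getLast hs).2 < q.2) <:+ L :=
      (filter_suffix_of_pairwise (fun _ _ hab ha => lt_of_lt_of_le ha hab)
        (pairwise_col_le_of_isChain (hchain.drop p))).trans (drop_suffix p L)
    obtain ⟨htail, hcnt⟩ := segsAux_countP hp fuel _
      ((length_filter_le _ _).trans (by rw [length_drop]; omega))
      (hchain.suffix hsuf) (hnd.sublist hsuf.sublist) hhead₂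
      fun q hq =>
        hlast q (getLast?_eq_of_isSuffix hsuf (ne_nil_of_mem (mem_of_mem_getLast? hq)) ▸ hq)
    have hsub : (s :: segsAux p fuel _).flatten <+ L :=
      hsplit ▸ (htail.trans (filter_sublist)).append_left s
    refine ⟨hsub, ?_⟩
    rw [countP_flatten_cons_of_length_eq hs hfull (hnd.sublist hsub), flatten_cons, length_append,
      hfull]
    simp only [Nat.dvd_add_self_left]
    omega

end Segments

section Rim

def IsRightmost (l : List ℕ) (q : ℕ × ℕ) : Prop := q.2 = l.getD q.1 0

instance (l : List ℕ) : DecidablePred (IsRightmost l) :=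
  fun q => inferInstanceAs (Decidable (q.2 = l.getD q.1 0))

def rimRow (l : List ℕ) (i : ℕ) : List (ℕ × ℕ) :=
  (range' (max (l.getD (i + 1) 0) 1) (l.getD i 0 + 1 - max (l.getD (i + 1) 0) 1)).map
    (fun j => (i, j))

def rimTopRows (l : List ℕ) (k : ℕ) : List (ℕ × ℕ) := (range k).reverse.flatMap (rimRow l)

lemma rimList_eq_rimTopRows (l : List ℕ) : rimList l = rimTopRows l l.length := rfl

variable {l : List ℕ}

lemma IsPartition.antitone_getD (hl : IsPartition l) : Antitone (l.getD · 0) := by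
  intro i j hij
  show l.getD j 0 ≤ l.getD i 0
  by_cases hj : j < l.length
  · rw [getD_eq_getElem _ _ hj, getD_eq_getElem _ _ (lt_of_le_of_lt hij hj)]
    rcases eq_or_lt_of_le hij with rfl | hlt
    · rfl
    · exact pairwise_iff_getElem.mp hl i j _ hj hlt
  · rw [getD_eq_default _ _ (not_lt.mp hj)]
    exact Nat.zero_le _

lemma mem_rimRow {i : ℕ} {q : ℕ × ℕ} :
    q ∈ rimRow l i ↔ q.1 = i ∧ max (l.getD (i + 1) 0) 1 ≤ q.2 ∧ q.2 ≤ l.getD i 0 := by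
  obtain ⟨a, b⟩ := q
  simp only [rimRow, mem_map, mem_range'_1, Prod.mk.injEq]
  constructor
  · rintro ⟨j, hj, rfl, rfl⟩
    omega
  · rintro ⟨rfl, h⟩
    exact ⟨b, by omega, rfl, rfl⟩

section Antitone

variable (hl : Antitone (l.getD · 0))
include hl

lemma rimRow_eq_nil_iff {i : ℕ} : rimRow l i = [] ↔ l.getD i 0 = 0 := by
  have : l.getD (i + 1) 0 ≤ l.getD i 0 := hl (Nat.le_succ i)
  simp only [rimRow, map_eq_nil_iff, range'_eq_nil_iff]
  omega

lemma head?_rimRow {i : ℕ} (hi : 0 < l.getD i 0) :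
    (rimRow l i).head? = some (i, max (l.getD (i + 1) 0) 1) := by
  have : l.getD (i + 1) 0 ≤ l.getD i 0 := hl (Nat.le_succ i)
  simp only [rimRow, head?_map, head?_range']
  rw [if_neg (by omega)]
  rfl

lemma getLast?_rimRow {i : ℕ} (hi : 0 < l.getD i 0) :
    (rimRow l i).getLast? = some (i, l.getD i 0) := by
  have : l.getD (i + 1) 0 ≤ l.getD i 0 := hl (Nat.le_succ i)
  simp only [rimRow, getLast?_map, getLast?_range']
  rw [if_neg (by omega)]
  simp only [Option.map_some, Option.some.injEq, Prod.mk.injEq, true_and]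
  omega

end Antitone

lemma isChain_rimRow (i : ℕ) : IsChain (ColStep (IsRightmost l)) (rimRow l i) := by
  refine (isChain_map _).mpr (isChain_iff_getElem.mpr fun j hj => ?_)
  simp only [length_range'] at hj
  simp only [getElem_range', ColStep, IsRightmost]
  right
  omega

lemma nodup_rimRow (i : ℕ) : (rimRow l i).Nodup :=
  (nodup_range' ..).map fun _ _ h => (Prod.mk.inj h).2

lemma rimTopRows_succ (k : ℕ) : rimTopRows l (k + 1) = rimRow l k ++ rimTopRows l k := by
  simp [rimTopRows, range_succ]

lemma mem_rimTopRows {k : ℕ} {q : ℕ × ℕ} : q ∈ rimTopRows l k ↔ q.1 < k ∧ q ∈ rimRow l q.1 := by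
  simp only [rimTopRows, mem_flatMap, mem_reverse, mem_range]
  constructor
  · rintro ⟨i, hi, hq⟩
    obtain rfl := (mem_rimRow.mp hq).1
    exact ⟨hi, hq⟩
  · exact fun h => ⟨q.1, h⟩

lemma nodup_rimTopRows (k : ℕ) : (rimTopRows l k).Nodup := by
  refine nodup_flatMap.mpr ⟨fun i _ => nodup_rimRow i, (nodup_range.reverse).imp fun hij => ?_⟩
  exact fun q hi hj => hij ((mem_rimRow.mp hj).1.symm.trans (mem_rimRow.mp hi).1)

section Antitone

variable (hl : Antitone (l.getD · 0))
include hl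

lemma head?_rimTopRows (k : ℕ) : ∀ q ∈ (rimTopRows l k).head?, q.2 = max (l.getD k 0) 1 := by
  induction k with
  | zero => simp [rimTopRows]
  | succ k ih =>
    rw [rimTopRows_succ]
    rcases Nat.eq_zero_or_pos (l.getD k 0) with hk | hk
    · have : l.getD (k + 1) 0 ≤ l.getD k 0 := hl (Nat.le_succ k)
      rw [(rimRow_eq_nil_iff hl).mpr hk, nil_append]
      intro q hq
      rw [ih q hq]
      omega
    · rw [head?_append, head?_rimRow hl hk]
      simp

lemma getLast?_rimTopRows (h0 : 0 < l.getD 0 0) (k : ℕ) :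
    (rimTopRows l (k + 1)).getLast? = some (0, l.getD 0 0) := by
  induction k with
  | zero => simp [rimTopRows, getLast?_rimRow hl h0]
  | succ k ih => rw [rimTopRows_succ, getLast?_append, ih, Option.some_or]

lemma isChain_rimTopRows (k : ℕ) : IsChain (ColStep (IsRightmost l)) (rimTopRows l k) := by
  induction k with
  | zero => simp [rimTopRows]
  | succ k ih =>
    rw [rimTopRows_succ]
    refine (isChain_rimRow k).append ih fun x hx y hy => ?_
    have hk : 0 < l.getD k 0 := by
      by_contra hk
      rw [(rimRow_eq_nil_iff hl).mpr (by omega)] at hx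
      simp at hx
    rw [getLast?_rimRow hl hk, Option.mem_some_iff] at hx
    subst hx
    left
    exact ⟨rfl, (head?_rimTopRows hl k y hy).trans (by omega)⟩

end Antitone

lemma lt_length_and_pos_of_mem_rimList {q : ℕ × ℕ} (hq : q ∈ rimList l) :
    q.1 < l.length ∧ 0 < q.2 := by
  rw [rimList_eq_rimTopRows] at hq
  obtain ⟨hrow, hq⟩ := mem_rimTopRows.mp hq
  exact ⟨hrow, by have := (mem_rimRow.mp hq).2.1; omega⟩

lemma getLast?_rimList (hl : Antitone (l.getD · 0)) :
    (rimList l).getLast? = if l.getD 0 0 = 0 then none else some (0, l.getD 0 0) := by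
  split_ifs with h0
  · refine getLast?_eq_none_iff.mpr (eq_nil_iff_forall_not_mem.mpr fun q hq => ?_)
    have hpos := (lt_length_and_pos_of_mem_rimList hq).2
    rw [rimList_eq_rimTopRows] at hq
    have hcol := (mem_rimRow.mp (mem_rimTopRows.mp hq).2).2.2
    have : l.getD q.1 0 ≤ l.getD 0 0 := hl (Nat.zero_le _)
    omega
  · obtain ⟨k, hk⟩ : ∃ k, l.length = k + 1 :=
      Nat.exists_eq_succ_of_ne_zero fun h => h0 (by simp [length_eq_zero_iff.mp h])
    rw [rimList_eq_rimTopRows, hk, getLast?_rimTopRows hl (Nat.pos_of_ne_zero h0)]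

end Rim

section Xu

variable {p : ℕ} {l : List ℕ}

theorem pRim_sublist_and_countP (hp : 0 < p) (hl : Antitone (l.getD · 0)) :
    pRim p l <+ rimList l ∧
      (pRim p l).countP (fun q => ¬ IsRightmost l q ∨ q ∈ segEnds p l)
        + (if p ∣ aNum p l then 0 else 1) = l.getD 0 0 := by
  have hlast := getLast?_rimList hl
  have hcol : ((rimList l).getLast?.map Prod.snd).getD 0 = l.getD 0 0 := by
    rw [hlast]
    split_ifs with h0
    · exact h0.symm
    · rfl
  have hhead : ∀ q ∈ (rimList l).head?, q.2 = 0 + 1 := fun q hq =>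
    (head?_rimTopRows hl _ q hq).trans (by simp)
  have hR : ∀ q ∈ (rimList l).getLast?, IsRightmost l q := by
    rw [hlast]
    split_ifs <;> simp [IsRightmost]
  obtain ⟨hsub, hcount⟩ := segsAux_countP hp (rimList l).length 0 le_rfl
    (isChain_rimTopRows hl _) (nodup_rimTopRows _) hhead hR
  rw [hcol, add_zero] at hcount
  exact ⟨hsub, hcount⟩

lemma jNum_eq_countP (h : ∀ q ∈ pRim p l, 0 < q.2) :
    jNum p l = ((range l.length).map fun i => (i, l.getD i 0)).countP
      (fun q => q ∈ pRim p l ∧ q ∉ segEnds p l) := by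
  have hsum : (Jmap p l).sum + (range l.length).countP
      (fun i => (i, l.getD i 0) ∈ pRim p l ∧ (i, l.getD i 0) ∉ segEnds p l) = l.sum := by
    conv_rhs => rw [← map_getD_range l]
    exact sum_map_ite_sub_one_add_countP _ _ fun i _ hi => h _ hi.1
  rw [countP_map]
  unfold jNum
  exact Nat.sub_eq_of_eq_add' hsum.symm

theorem jNum_add_getD_zero (hp : 0 < p) (hl : IsPartition l) :
    jNum p l + l.getD 0 0 = aNum p l + if p ∣ aNum p l then 0 else 1 := by
  obtain ⟨hsub, hcount⟩ := pRim_sublist_and_countP hp hl.antitone_getD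
  have hmem : ∀ q ∈ pRim p l, q.1 < l.length ∧ 0 < q.2 :=
    fun q hq => lt_length_and_pos_of_mem_rimList (hsub.subset hq)
  have hnd : (pRim p l).Nodup := (nodup_rimTopRows _).sublist hsub
  have hrows : ((range l.length).map fun i => (i, l.getD i 0)).Nodup :=
    nodup_range.map fun _ _ h => (Prod.mk.inj h).1
  have hj : jNum p l = (pRim p l).countP (fun q => IsRightmost l q ∧ q ∉ segEnds p l) := by
    rw [jNum_eq_countP fun q hq => (hmem q hq).2, countP_mem_and_comm _ hrows hnd]
    refine countP_congr fun q hq => ?_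
    obtain ⟨i, j⟩ := q
    simp only [mem_map, mem_range, Prod.mk.injEq, decide_eq_true_eq]
    constructor
    · rintro ⟨⟨i, -, rfl, rfl⟩, hE⟩
      exact ⟨rfl, hE⟩
    · rintro ⟨hR, hE⟩
      exact ⟨⟨i, (hmem _ hq).1, rfl, hR.symm⟩, hE⟩
  have hcompl : (pRim p l).countP (fun q => ¬ (IsRightmost l q ∧ q ∉ segEnds p l))
      = (pRim p l).countP (fun q => ¬ IsRightmost l q ∨ q ∈ segEnds p l) :=
    countP_congr fun q _ => by simp only [decide_eq_true_eq]; tauto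
  have hlen := length_eq_countP_add_countP (fun q => decide (IsRightmost l q ∧ q ∉ segEnds p l))
    (l := pRim p l)
  simp only [decide_eq_true_eq] at hlen
  rw [aNum] at hcount ⊢
  omega

end Xu

end Mullineux

open Mullineux in
theorem jNum_eq_head_mullineux_general (p : ℕ) (hp : p.Prime) (l : List ℕ)
    (hl : IsRestricted p l) (mu : List ℕ)
    (hM : IsMullineuxConjugate p l mu) :
    jNum p l = mu.getD 0 0 := by
  have hxu := jNum_add_getD_zero hp.pos hl.1
  have hs₁ := (hM 0).2
  simp only [Function.iterate_zero, id_eq, Int.natCast_dvd_natCast] at hs₁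
  split_ifs at hs₁ hxu <;> omega

open Mullineux in
/-- For a `p`-restricted partition `λ`, `j(λ)` equals the first part of the Mullineux
conjugate `M(λ)` (any partition having the Mullineux symbol prescribed by `λ`). -/
theorem jNum_eq_head_mullineux (p : ℕ) (hp : p.Prime) (l : List ℕ)
    (hl : IsRestricted p l) (mu : List ℕ) (hmu : IsPartition mu)
    (hM : IsMullineuxConjugate p l mu) :
    jNum p l = mu.getD 0 0 :=
  jNum_eq_head_mullineux_general p hp l hl mu hM
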